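/- The left-symmetric algebra A_{2,α} on ℂ⁴ is associative if and only if α = 0. -/
import Mathlib


/-- Left-multiplication matrices of the family `A_{2,α}` on `ℂ⁴` with basis
`(x, y, h, z)` (columns indexed by the basis). -/
noncomputable def L2 (α : ℂ) : Fin 4 → Matrix (Fin 4) (Fin 4) ℂ :=
  ![!![0, 0, -1, 1 + α; 0, 0, 0, 0; 0, (1 + α)/2, 0, 0; 0, 1/2, 0, 0],
    !![0, 0, 0, 0; 0, 0, 1, 1 - α; (α - 1)/2, 0, 0, 0; 1/2, 0, 0, 0],
    !![1, 0, 0, 0; 0, -1, 0, 0; 0, 0, α, 1 - α^2; 0, 0, 1, -α],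
    !![1 + α, 0, 0, 0; 0, 1 - α, 0, 0; 0, 0, 1 - α^2, α^3 - α; 0, 0, -α, 1 + α^2]]

/-- The bilinear product of `A_{2,α}` on `ℂ⁴` determined by `L2 α`. -/
noncomputable def mul2 (α : ℂ) (a b : Fin 4 → ℂ) : Fin 4 → ℂ :=
  ∑ i : Fin 4, a i • (L2 α i).mulVec b

/-- Explicit componentwise formula for `mul2`. -/
lemma mul2_eq (α : ℂ) (a b : Fin 4 → ℂ) : mul2 α a b =
    ![a 0 * (-(b 2) + (1+α) * b 3) + a 2 * b 0 + a 3 * ((1+α) * b 0),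
      a 1 * (b 2 + (1-α) * b 3) + a 2 * (-(b 1)) + a 3 * ((1-α) * b 1),
      a 0 * ((1+α)/2 * b 1) + a 1 * ((α-1)/2 * b 0) + a 2 * (α * b 2 + (1-α^2) * b 3)
        + a 3 * ((1-α^2) * b 2 + (α^3-α) * b 3),
      a 0 * (1/2 * b 1) + a 1 * (1/2 * b 0) + a 2 * (b 2 + (-α) * b 3)
        + a 3 * ((-α) * b 2 + (1+α^2) * b 3)] := by
  funext j
  simp [mul2, L2, Matrix.mulVec, dotProduct, Fin.sum_univ_four, Matrix.vecHead,
    Matrix.vecTail]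
  fin_cases j <;> simp [Matrix.vecHead, Matrix.vecTail, Function.comp]

/-- `A_{2,α}` is associative if and only if `α = 0`. -/
theorem A2_associative_iff (α : ℂ) :
    (∀ a b c : Fin 4 → ℂ, mul2 α (mul2 α a b) c = mul2 α a (mul2 α b c)) ↔ α = 0 := by
  constructor
  · intro h
    have key := congrFun (h ![1,0,0,0] ![0,1,0,0] ![1,0,0,0]) 0
    simp only [mul2_eq, Matrix.cons_val_zero, Matrix.cons_val_one, Matrix.cons_val_two,
      Matrix.cons_val_three, Matrix.head_cons, Matrix.tail_cons] at key
    linear_combination key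
  · rintro rfl
    intro a b c
    funext j
    simp only [mul2_eq]
    fin_cases j <;>
      simp only [Matrix.cons_val_zero, Matrix.cons_val_one, Matrix.cons_val_two,
        Matrix.cons_val_three, Matrix.head_cons, Matrix.tail_cons, Fin.zero_eta,
        Fin.mk_one, Fin.reduceFinMk] <;> ring
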